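/- arXiv:1506.05127 — 7 statements merged into one kernel-verified Lean document; each statement's English description precedes it below -/
import Mathlib

section
/- Let E be a strictly convex real Banach space, K ⊆ E nonempty, closed, bounded and convex, and f : K → K nonexpansive. Then the fixed point set Fix(f) = {x ∈ K : f(x) = x} is convex. -/
theorem fixedPointSet_convex_of_nonexpansive
    {E : Type*} [NormedAddCommGroup E] [NormedSpace ℝ E] [CompleteSpace E]
    [StrictConvexSpace ℝ E]
    (K : Set E) (hne : K.Nonempty) (hcl : IsClosed K)
    (hbd : Bornology.IsBounded K) (hconv : Convex ℝ K)
    (f : E → E) (hmaps : Set.MapsTo f K K)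
    (hnonexp : ∀ x ∈ K, ∀ y ∈ K, ‖f x - f y‖ ≤ ‖x - y‖) :
    Convex ℝ {x | x ∈ K ∧ f x = x} := by
  rintro x ⟨hxK, hxf⟩ y ⟨hyK, hyf⟩ a b ha hb hab
  have hzK : a • x + b • y ∈ K := hconv hxK hyK ha hb hab
  set z := a • x + b • y with hz
  refine ⟨hzK, ?_⟩
  have hzl : z = AffineMap.lineMap x y b := by
    rw [AffineMap.lineMap_apply_module, hz, show (1:ℝ) - b = a by linarith]
  have hd1 : dist x z = b * dist x y := by
    rw [hzl, dist_comm, dist_lineMap_left, Real.norm_of_nonneg hb]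
  have hd2 : dist z y = a * dist x y := by
    rw [hzl, dist_lineMap_right, Real.norm_of_nonneg (by linarith : (0:ℝ) ≤ 1 - b)]
    congr 1; linarith
  have h1 : dist x (f z) ≤ b * dist x y := by
    calc dist x (f z) = dist (f x) (f z) := by rw [hxf]
    _ ≤ dist x z := by
        simpa [dist_eq_norm] using hnonexp x hxK z hzK
    _ = b * dist x y := hd1
  have h2 : dist (f z) y ≤ a * dist x y := by
    calc dist (f z) y = dist (f z) (f y) := by rw [hyf]
    _ ≤ dist z y := by simpa [dist_eq_norm] using hnonexp z hzK y hyK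
    _ = a * dist x y := hd2
  have htri : dist x y ≤ dist x (f z) + dist (f z) y := dist_triangle _ _ _
  have he1 : dist x (f z) = b * dist x y := by
    have : a * dist x y ≥ 0 := mul_nonneg ha dist_nonneg
    nlinarith [dist_nonneg (x := x) (y := f z), dist_nonneg (x := f z) (y := y)]
  have he2 : dist (f z) y = a * dist x y := by
    nlinarith [dist_nonneg (x := x) (y := f z), dist_nonneg (x := f z) (y := y)]
  have := eq_lineMap_of_dist_eq_mul_of_dist_eq_mul (x := x) (y := f z) (z := y) (r := b)
    he1 (by rw [he2]; congr 1; linarith)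
  rw [this, ← hzl]
end

section
/- Let E be a strictly convex real Banach space, K ⊆ E convex, f : K → K nonexpansive, and x, y ∈ K fixed points of f. Then the midpoint (x+y)/2 is also a fixed point of f. -/
theorem midpoint_fixed_of_nonexpansive
    {E : Type*} [NormedAddCommGroup E] [NormedSpace ℝ E] [CompleteSpace E]
    [StrictConvexSpace ℝ E]
    (K : Set E) (hconv : Convex ℝ K)
    (f : E → E) (hmaps : Set.MapsTo f K K)
    (hnonexp : ∀ a ∈ K, ∀ b ∈ K, ‖f a - f b‖ ≤ ‖a - b‖)
    (x y : E) (hx : x ∈ K) (hy : y ∈ K) (hfx : f x = x) (hfy : f y = y) :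
    f ((1/2 : ℝ) • (x + y)) = (1/2 : ℝ) • (x + y) := by
  set m : E := (1/2 : ℝ) • (x + y) with hm
  have hmmid : m = midpoint ℝ x y := by
    simp [midpoint_eq_smul_add, hm]
  have hmK : m ∈ K := by
    rw [hmmid]
    exact hconv.segment_subset hx hy (midpoint_mem_segment x y)
  have hdx : dist m x = dist x y / 2 := by
    rw [hmmid, dist_comm, dist_left_midpoint (𝕜 := ℝ)]; rw [Real.norm_ofNat]; ring
  have hdy : dist m y = dist x y / 2 := by
    rw [hmmid, dist_midpoint_right (𝕜 := ℝ)]; rw [Real.norm_ofNat]; ring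
  have h1 : dist (f m) x ≤ dist x y / 2 := by
    calc dist (f m) x = ‖f m - f x‖ := by rw [hfx, dist_eq_norm]
    _ ≤ ‖m - x‖ := hnonexp m hmK x hx
    _ = dist x y / 2 := by rw [← dist_eq_norm, hdx]
  have h2 : dist (f m) y ≤ dist x y / 2 := by
    calc dist (f m) y = ‖f m - f y‖ := by rw [hfy, dist_eq_norm]
    _ ≤ ‖m - y‖ := hnonexp m hmK y hy
    _ = dist x y / 2 := by rw [← dist_eq_norm, hdy]
  have htri : dist x y ≤ dist x (f m) + dist (f m) y := dist_triangle _ _ _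
  have e1 : dist (f m) x = dist x y / 2 := by
    rw [dist_comm x (f m)] at htri; linarith
  have e2 : dist (f m) y = dist x y / 2 := by
    rw [dist_comm x (f m)] at htri; linarith
  have := eq_midpoint_of_dist_eq_half (x := x) (z := y) (y := f m)
    (by rw [dist_comm]; exact e1) e2
  rw [this, hmmid]
end

section
/- Let E be a uniformly convex Banach space, K ⊆ E nonempty, convex, closed and bounded, f : K → K nonexpansive, and A ⊆ K nonempty, closed and convex. Then A ∩ Fix(f) ≠ ∅ if and only if inf{‖f(x) - x‖ : x ∈ A} = 0. -/
open Filter Topology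

private lemma norm_inv_smul_eq {E : Type*} [NormedAddCommGroup E] [NormedSpace ℝ E]
    {r : ℝ} (hr : 0 < r) (a : E) : ‖r⁻¹ • a‖ = ‖a‖ / r := by
  rw [norm_smul, Real.norm_eq_abs, abs_of_pos (inv_pos.2 hr), inv_mul_eq_div]

private lemma norm_inv_smul_le_one {E : Type*} [NormedAddCommGroup E] [NormedSpace ℝ E]
    {r : ℝ} (hr : 0 < r) {a : E} (h : ‖a‖ ≤ r) : ‖r⁻¹ • a‖ ≤ 1 := by
  rw [norm_inv_smul_eq hr]
  exact (div_le_one hr).2 h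

set_option maxHeartbeats 1000000 in
private lemma groetsch_aux {E : Type*} [NormedAddCommGroup E] [NormedSpace ℝ E]
    [UniformConvexSpace E]
    {K : Set E} {f : E → E} {C : ℝ}
    (hC : ∀ x ∈ K, ‖x‖ ≤ C)
    (hmaps : Set.MapsTo f K K)
    (hnonexp : ∀ x ∈ K, ∀ y ∈ K, ‖f x - f y‖ ≤ ‖x - y‖)
    (hKconv : Convex ℝ K)
    {c : ℝ} (hc : 0 < c) :
    ∃ ε, 0 < ε ∧ ε ≤ c ∧ ∀ x ∈ K, ∀ y ∈ K, ‖f x - x‖ ≤ ε → ‖f y - y‖ ≤ ε →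
      ‖f ((2:ℝ)⁻¹ • (x + y)) - (2:ℝ)⁻¹ • (x + y)‖ ≤ c := by
  set C' := max C 0 with hC'def
  have hC' : ∀ x ∈ K, ‖x‖ ≤ C' := fun x hx => (hC x hx).trans (le_max_left _ _)
  have hC0 : 0 ≤ C' := le_max_right _ _
  clear_value C'
  obtain ⟨δ, hδ, hUC⟩ := exists_forall_closed_ball_dist_add_le_two_sub E
    (show 0 < 4 * c / (2 * C' + 1) by positivity)
  set ε := min (c / 2) (min (δ * c / 9) (1 / 2)) with hεdef
  have hε1 : ε ≤ c / 2 := min_le_left _ _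
  have hε2 : ε ≤ δ * c / 9 := le_trans (min_le_right _ _) (min_le_left _ _)
  have hε3 : ε ≤ 1 / 2 := le_trans (min_le_right _ _) (min_le_right _ _)
  have hεpos : 0 < ε := lt_min (by positivity) (lt_min (by positivity) (by norm_num))
  clear_value ε
  refine ⟨ε, hεpos, by linarith, ?_⟩
  intro x hx y hy hfx hfy
  set m := (2:ℝ)⁻¹ • (x + y) with hm
  have hmK : m ∈ K := by
    have h2 : ((2:ℝ)⁻¹) + (2:ℝ)⁻¹ = 1 := by norm_num
    have := hKconv hx hy (by norm_num : (0:ℝ) ≤ 2⁻¹) (by norm_num : (0:ℝ) ≤ 2⁻¹) h2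
    rwa [hm, smul_add]
  have hmx : m - x = (2:ℝ)⁻¹ • (y - x) := by rw [hm]; module
  have hmy : m - y = (2:ℝ)⁻¹ • (x - y) := by rw [hm]; module
  set d := ‖x - y‖ with hddef
  clear_value d
  clear_value m
  have hd0 : 0 ≤ d := hddef ▸ norm_nonneg _
  have hdC : d ≤ 2 * C' := by
    calc d = ‖x - y‖ := hddef
      _ ≤ ‖x‖ + ‖y‖ := norm_sub_le _ _
      _ ≤ 2 * C' := by have := hC' x hx; have := hC' y hy; linarith
  have hnmx : ‖m - x‖ = d / 2 := by
    rw [hmx, norm_smul, Real.norm_eq_abs, norm_sub_rev,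
      abs_of_pos (by norm_num : (0:ℝ) < 2⁻¹), hddef]
    ring
  have hnmy : ‖m - y‖ = d / 2 := by
    rw [hmy, norm_smul, Real.norm_eq_abs, abs_of_pos (by norm_num : (0:ℝ) < 2⁻¹), hddef]
    ring
  have ha : ‖f m - x‖ ≤ d / 2 + ε := by
    have hsplit : f m - x = (f m - f x) + (f x - x) := by abel
    calc ‖f m - x‖ ≤ ‖f m - f x‖ + ‖f x - x‖ := by rw [hsplit]; exact norm_add_le _ _
      _ ≤ ‖m - x‖ + ε := add_le_add (hnonexp _ hmK _ hx) hfx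
      _ = d / 2 + ε := by rw [hnmx]
  have hb : ‖f m - y‖ ≤ d / 2 + ε := by
    have hsplit : f m - y = (f m - f y) + (f y - y) := by abel
    calc ‖f m - y‖ ≤ ‖f m - f y‖ + ‖f y - y‖ := by rw [hsplit]; exact norm_add_le _ _
      _ ≤ ‖m - y‖ + ε := add_le_add (hnonexp _ hmK _ hy) hfy
      _ = d / 2 + ε := by rw [hnmy]
  by_cases hdc : d ≤ c / 2
  · have hsplit : f m - m = (f m - x) + (x - m) := by abel
    calc ‖f m - m‖ ≤ ‖f m - x‖ + ‖x - m‖ := by rw [hsplit]; exact norm_add_le _ _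
      _ ≤ (d / 2 + ε) + d / 2 := by
          refine add_le_add ha ?_
          rw [norm_sub_rev, hnmx]
      _ ≤ c := by linarith
  · push_neg at hdc
    by_contra hcon
    push_neg at hcon
    set r := d / 2 + ε with hrdef
    clear_value r
    have hr : 0 < r := by rw [hrdef]; positivity
    have hab : (f m - x) + (f m - y) = (2:ℝ) • (f m - m) := by rw [hm]; module
    have habn : ‖(f m - x) + (f m - y)‖ = 2 * ‖f m - m‖ := by
      rw [hab, norm_smul, Real.norm_eq_abs]; norm_num
    set u := r⁻¹ • (f m - x) with hu_def
    set v := -(r⁻¹ • (f m - y)) with hv_def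
    clear_value u v
    have hu : ‖u‖ ≤ 1 := hu_def ▸ norm_inv_smul_le_one hr ha
    have hv : ‖v‖ ≤ 1 := by rw [hv_def, norm_neg]; exact norm_inv_smul_le_one hr hb
    have huv_sub : u - v = r⁻¹ • ((f m - x) + (f m - y)) := by
      rw [hu_def, hv_def, sub_neg_eq_add, smul_add]
    have huv_add : u + v = r⁻¹ • (y - x) := by
      rw [hu_def, hv_def]; module
    have hrle : r ≤ (2 * C' + 1) / 2 := by rw [hrdef]; linarith
    have hge : 4 * c / (2 * C' + 1) ≤ ‖u - v‖ := by
      rw [huv_sub, norm_inv_smul_eq hr, habn]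
      rw [div_le_div_iff₀ (by positivity) hr]
      have h1 : 4 * c * r ≤ 2 * c * (2 * C' + 1) := by
        nlinarith [mul_le_mul_of_nonneg_left hrle (by positivity : (0:ℝ) ≤ 4 * c)]
      have h2 : 2 * c * (2 * C' + 1) ≤ 2 * ‖f m - m‖ * (2 * C' + 1) := by
        nlinarith [mul_lt_mul_of_pos_right hcon (by positivity : (0:ℝ) < 2 * C' + 1)]
      linarith
    have hconc := hUC hu hv hge
    rw [huv_add, norm_inv_smul_eq hr, norm_sub_rev, ← hddef] at hconc
    rw [div_le_iff₀ hr] at hconc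
    rw [hrdef] at hconc
    have hdpos : 0 < d := lt_trans (by positivity) hdc
    nlinarith [mul_pos hδ hdpos, mul_pos hδ hεpos, mul_lt_mul_of_pos_left hdc hδ]

set_option maxHeartbeats 1000000 in
theorem intersects_fixedPointSet_iff_inf_zero
    {E : Type*} [NormedAddCommGroup E] [NormedSpace ℝ E] [CompleteSpace E]
    [UniformConvexSpace E]
    (K : Set E) (hKne : K.Nonempty) (hKcl : IsClosed K)
    (hKbd : Bornology.IsBounded K) (hKconv : Convex ℝ K)
    (f : E → E) (hmaps : Set.MapsTo f K K)
    (hnonexp : ∀ x ∈ K, ∀ y ∈ K, ‖f x - f y‖ ≤ ‖x - y‖)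
    (A : Set E) (hAsub : A ⊆ K) (hAne : A.Nonempty) (hAcl : IsClosed A)
    (hAconv : Convex ℝ A) :
    (∃ x ∈ A, f x = x) ↔ sInf ((fun x => ‖f x - x‖) '' A) = 0 := by
  constructor
  · rintro ⟨z, hzA, hfz⟩
    refine le_antisymm ?_ ?_
    · refine csInf_le ⟨0, ?_⟩ ⟨z, hzA, by simp [hfz]⟩
      rintro y ⟨w, -, rfl⟩; exact norm_nonneg _
    · refine le_csInf (hAne.image _) ?_
      rintro y ⟨w, -, rfl⟩; exact norm_nonneg _
  · intro hinf
    obtain ⟨C, hCbd⟩ := hKbd.exists_norm_le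
    have hCA : ∀ z ∈ A, ‖z‖ ≤ C := fun z hz => hCbd z (hAsub hz)
    -- approximate fixed point sets within A
    set S : ℝ → Set E := fun ε => {z | z ∈ A ∧ ‖f z - z‖ ≤ ε} with hSdef
    have hSne : ∀ ε, 0 < ε → (S ε).Nonempty := by
      intro ε hε
      have hne : ((fun x => ‖f x - x‖) '' A).Nonempty := hAne.image _
      obtain ⟨y, ⟨z, hzA, rfl⟩, hy⟩ := exists_lt_of_csInf_lt hne (hinf ▸ hε)
      exact ⟨z, hzA, hy.le⟩
    have hTbdd : ∀ ε, BddBelow ((fun z : E => ‖z‖) '' S ε) := by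
      intro ε; exact ⟨0, by rintro y ⟨z, -, rfl⟩; exact norm_nonneg _⟩
    set hfun : ℝ → ℝ := fun ε => sInf ((fun z : E => ‖z‖) '' S ε) with hhdef
    have hle_norm : ∀ ε, ∀ z ∈ S ε, hfun ε ≤ ‖z‖ :=
      fun ε z hz => csInf_le (hTbdd ε) ⟨z, hz, rfl⟩
    have hfnonneg : ∀ ε, 0 < ε → 0 ≤ hfun ε := by
      intro ε hε
      refine le_csInf ((hSne ε hε).image _) ?_
      rintro y ⟨z, -, rfl⟩; exact norm_nonneg _
    have hfleC : ∀ ε, 0 < ε → hfun ε ≤ C := by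
      intro ε hε
      obtain ⟨z, hz⟩ := hSne ε hε
      exact (hle_norm ε z hz).trans (hCA z hz.1)
    have hfmono : ∀ ε₁ ε₂, 0 < ε₁ → ε₁ ≤ ε₂ → hfun ε₂ ≤ hfun ε₁ := by
      intro ε₁ ε₂ h1 h12
      refine csInf_le_csInf (hTbdd ε₂) ((hSne ε₁ h1).image _) ?_
      rintro y ⟨z, hz, rfl⟩
      exact ⟨z, ⟨hz.1, hz.2.trans h12⟩, rfl⟩
    -- the limit of minimal norms
    set d := sSup (hfun '' Set.Ioi (0:ℝ)) with hddef
    clear_value d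
    have hdbdd : BddAbove (hfun '' Set.Ioi (0:ℝ)) := by
      refine ⟨C, ?_⟩; rintro y ⟨ε, hε, rfl⟩; exact hfleC ε hε
    have hdne : (hfun '' Set.Ioi (0:ℝ)).Nonempty := ⟨hfun 1, 1, by norm_num, rfl⟩
    have hled : ∀ ε, 0 < ε → hfun ε ≤ d := fun ε hε => hddef ▸ le_csSup hdbdd ⟨ε, hε, rfl⟩
    have hd0 : 0 ≤ d := (hfnonneg 1 one_pos).trans (hled 1 one_pos)
    have hdexists : ∀ θ, 0 < θ → ∃ ε, 0 < ε ∧ d - θ < hfun ε := by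
      intro θ hθ
      obtain ⟨y, ⟨ε, hε, rfl⟩, hy⟩ :=
        exists_lt_of_lt_csSup hdne (hddef ▸ (by linarith : d - θ < d))
      refine ⟨ε, hε, ?_⟩
      rw [hddef]
      exact hy
    -- Groetsch moduli
    have gro : ∀ n : ℕ, ∃ ε, 0 < ε ∧ ε ≤ 1 / (n + 1 : ℝ) ∧
        ∀ x ∈ K, ∀ y ∈ K, ‖f x - x‖ ≤ ε → ‖f y - y‖ ≤ ε →
          ‖f ((2:ℝ)⁻¹ • (x + y)) - (2:ℝ)⁻¹ • (x + y)‖ ≤ 1 / (n + 1 : ℝ) :=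
      fun n => groetsch_aux hCbd hmaps hnonexp hKconv (by positivity)
    choose g hg1 hg2 hg3 using gro
    -- monotone moduli
    set Em : ℕ → ℝ := fun n => Nat.rec (g 0) (fun k ih => min ih (g (k + 1))) n with hEmdef
    have hE0 : Em 0 = g 0 := rfl
    have hEsucc : ∀ n, Em (n + 1) = min (Em n) (g (n + 1)) := fun n => rfl
    have hEpos : ∀ n, 0 < Em n := by
      intro n; induction n with
      | zero => rw [hE0]; exact hg1 0
      | succ k ih => rw [hEsucc]; exact lt_min ih (hg1 (k + 1))
    have hEle : ∀ n, Em n ≤ g n := by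
      intro n; cases n with
      | zero => rw [hE0]
      | succ k => rw [hEsucc]; exact min_le_right _ _
    have hEanti : ∀ M n, M ≤ n → Em n ≤ Em M := by
      intro M n h
      induction n with
      | zero => simp_all
      | succ k ih =>
        rcases Nat.lt_or_ge M (k + 1) with h' | h'
        · exact (hEsucc k ▸ min_le_left _ _).trans (ih (Nat.lt_succ_iff.1 h'))
        · have : M = k + 1 := le_antisymm h h'
          subst this; rfl
    -- the minimizing approximate fixed point sequence
    have hxex : ∀ n : ℕ, ∃ z, z ∈ S (Em n) ∧ ‖z‖ < hfun (Em n) + 1 / (n + 1 : ℝ) := by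
      intro n
      have hne : ((fun z : E => ‖z‖) '' S (Em n)).Nonempty := (hSne _ (hEpos n)).image _
      obtain ⟨y, ⟨z, hz, rfl⟩, hy⟩ := exists_lt_of_csInf_lt hne
        (by have : (0:ℝ) < 1 / (n + 1 : ℝ) := by positivity
            linarith : sInf ((fun z : E => ‖z‖) '' S (Em n)) < hfun (Em n) + 1 / (n + 1 : ℝ))
      exact ⟨z, hz, hy⟩
    choose x hxS hxlt using hxex
    have hxA : ∀ n, x n ∈ A := fun n => (hxS n).1
    have hxK : ∀ n, x n ∈ K := fun n => hAsub (hxA n)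
    have hxfix : ∀ n, ‖f (x n) - x n‖ ≤ Em n := fun n => (hxS n).2
    have hxnorm : ∀ n, ‖x n‖ ≤ d + 1 / (n + 1 : ℝ) := by
      intro n
      have := (hxlt n).le
      have := hled (Em n) (hEpos n)
      linarith
    -- midpoints of far tails are good approximate fixed points in A
    have hmid : ∀ M n m : ℕ, M ≤ n → M ≤ m →
        (2:ℝ)⁻¹ • (x n + x m) ∈ S (1 / (M + 1 : ℝ)) := by
      intro M n m hn hm
      constructor
      · have h2 : ((2:ℝ)⁻¹) + (2:ℝ)⁻¹ = 1 := by norm_num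
        have := hAconv (hxA n) (hxA m) (by norm_num : (0:ℝ) ≤ 2⁻¹)
          (by norm_num : (0:ℝ) ≤ 2⁻¹) h2
        rwa [smul_add]
      · exact hg3 M _ (hxK n) _ (hxK m)
          ((hxfix n).trans ((hEanti M n hn).trans (hEle M)))
          ((hxfix m).trans ((hEanti M m hm).trans (hEle M)))
    -- the sequence is Cauchy
    have hone_div_mono : ∀ M n : ℕ, M ≤ n → 1 / (n + 1 : ℝ) ≤ 1 / (M + 1 : ℝ) := by
      intro M n h
      apply one_div_le_one_div_of_le (by positivity)
      exact_mod_cast by omega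
    have hcauchy : CauchySeq x := by
      rw [Metric.cauchySeq_iff']
      intro θ hθ
      rcases eq_or_lt_of_le hd0 with hdz | hdz
      · -- d = 0
        obtain ⟨M, hM⟩ := exists_nat_gt (2 / θ)
        refine ⟨M, fun n hn => ?_⟩
        have h1 : ‖x n‖ ≤ 1 / (M + 1 : ℝ) := by
          have := hxnorm n
          have := hone_div_mono M n hn
          linarith [hdz]
        have h2 : ‖x M‖ ≤ 1 / (M + 1 : ℝ) := by
          have := hxnorm M; linarith [hdz]
        have hM' : 2 / (M + 1 : ℝ) < θ := by
          rw [div_lt_iff₀ (by positivity)]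
          rw [div_lt_iff₀ hθ] at hM
          nlinarith
        calc dist (x n) (x M) ≤ ‖x n‖ + ‖x M‖ := by
              rw [dist_eq_norm]; exact norm_sub_le _ _
          _ ≤ 1 / (M + 1 : ℝ) + 1 / (M + 1 : ℝ) := add_le_add h1 h2
          _ = 2 / (M + 1 : ℝ) := by ring
          _ < θ := hM'
      · -- 0 < d
        obtain ⟨δ, hδ, hUC⟩ := exists_forall_closed_ball_dist_add_le_two_sub E
          (show 0 < θ / (d + 1) by positivity)
        obtain ⟨ε₀, hε₀, hdh⟩ := hdexists (δ * d / 8) (by positivity)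
        obtain ⟨M, hM⟩ := exists_nat_gt (max (1 / ε₀) (8 / (δ * d)))
        have hMpos : (0:ℝ) < M + 1 := by positivity
        have hM1 : 1 / (M + 1 : ℝ) < ε₀ := by
          have h := (le_max_left (1 / ε₀) (8 / (δ * d))).trans_lt hM
          rw [div_lt_iff₀ hε₀] at h
          rw [div_lt_iff₀ hMpos]
          nlinarith
        have hM2 : 1 / (M + 1 : ℝ) < δ * d / 8 := by
          have h := (le_max_right (1 / ε₀) (8 / (δ * d))).trans_lt hM
          have hδd : (0:ℝ) < δ * d := by positivity
          rw [div_lt_iff₀ hδd] at h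
          rw [div_lt_iff₀ hMpos]
          nlinarith
        refine ⟨M, fun n hn => ?_⟩
        rw [dist_eq_norm]
        by_contra hcon
        push_neg at hcon
        set t := 1 / (M + 1 : ℝ) with htdef
        have ht0 : 0 < t := by rw [htdef]; positivity
        set r := d + t with hrdef
        clear_value r
        have hr : 0 < r := by rw [hrdef]; positivity
        have hxn : ‖x n‖ ≤ r := by
          have := hxnorm n
          have := hone_div_mono M n hn
          rw [hrdef, htdef]; linarith
        have hxM : ‖x M‖ ≤ r := by rw [hrdef, htdef]; exact hxnorm M
        have hu : ‖r⁻¹ • x n‖ ≤ 1 := norm_inv_smul_le_one hr hxn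
        have hv : ‖r⁻¹ • x M‖ ≤ 1 := norm_inv_smul_le_one hr hxM
        have huv : θ / (d + 1) ≤ ‖r⁻¹ • x n - r⁻¹ • x M‖ := by
          rw [← smul_sub, norm_inv_smul_eq hr]
          have hrle : r ≤ d + 1 := by
            rw [hrdef, htdef]
            have : 1 / (M + 1 : ℝ) ≤ 1 := by
              rw [div_le_one hMpos]; linarith
            linarith
          rw [div_le_div_iff₀ (by positivity) hr]
          nlinarith [hθ.le, hcon]
        have hconc := hUC hu hv huv
        have hsum : r⁻¹ • x n + r⁻¹ • x M = r⁻¹ • (x n + x M) := by rw [smul_add]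
        rw [hsum, norm_inv_smul_eq hr, div_le_iff₀ hr] at hconc
        -- the midpoint has norm close to d
        have hzS := hmid M n M hn le_rfl
        have hzn : d - δ * d / 8 < ‖(2:ℝ)⁻¹ • (x n + x M)‖ := by
          have h1 := hle_norm _ _ hzS
          have h2 := hfmono (1 / (M + 1 : ℝ)) ε₀ (by positivity) hM1.le
          linarith
        have hnorm2 : ‖x n + x M‖ = 2 * ‖(2:ℝ)⁻¹ • (x n + x M)‖ := by
          rw [norm_smul, Real.norm_eq_abs, abs_of_pos (by norm_num : (0:ℝ) < 2⁻¹)]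
          ring
        rw [hnorm2, hrdef] at hconc
        nlinarith [mul_pos hδ hdz, mul_pos hδ ht0]
    -- pass to the limit
    obtain ⟨L, hL⟩ := cauchySeq_tendsto_of_complete hcauchy
    have hLA : L ∈ A := hAcl.mem_of_tendsto hL (Filter.Eventually.of_forall hxA)
    have hLK : L ∈ K := hAsub hLA
    have key : ∀ n, ‖f L - L‖ ≤ 2 * ‖L - x n‖ + 1 / (n + 1 : ℝ) := by
      intro n
      have hsplit : f L - L = (f L - f (x n)) + (f (x n) - x n) + (x n - L) := by abel
      calc ‖f L - L‖ ≤ ‖f L - f (x n)‖ + ‖f (x n) - x n‖ + ‖x n - L‖ := by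
            rw [hsplit]; exact norm_add₃_le
        _ ≤ ‖L - x n‖ + Em n + ‖L - x n‖ := by
            refine add_le_add (add_le_add (hnonexp _ hLK _ (hxK n)) (hxfix n)) ?_
            rw [norm_sub_rev]
        _ ≤ 2 * ‖L - x n‖ + 1 / (n + 1 : ℝ) := by
            have := (hEle n).trans (hg2 n)
            linarith
    have htend : Filter.Tendsto (fun n : ℕ => 2 * ‖L - x n‖ + 1 / (n + 1 : ℝ))
        Filter.atTop (nhds 0) := by
      have h1 : Filter.Tendsto (fun n : ℕ => ‖L - x n‖) Filter.atTop (nhds 0) := by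
        have : Filter.Tendsto (fun n : ℕ => L - x n) Filter.atTop (nhds (L - L)) :=
          Filter.Tendsto.sub tendsto_const_nhds hL
        rw [sub_self] at this
        simpa using this.norm
      have h2 : Filter.Tendsto (fun n : ℕ => 1 / (n + 1 : ℝ)) Filter.atTop (nhds 0) :=
        tendsto_one_div_add_atTop_nhds_zero_nat
      have := (h1.const_mul 2).add h2
      simpa using this
    have hle0 : ‖f L - L‖ ≤ 0 := ge_of_tendsto htend (Filter.Eventually.of_forall key)
    have : ‖f L - L‖ = 0 := le_antisymm hle0 (norm_nonneg _)
    exact ⟨L, hLA, sub_eq_zero.1 (norm_eq_zero.1 this)⟩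
end

section
/- Let E be a strictly convex real normed space, K ⊆ E nonempty, closed, bounded and convex, (λ_n) a sequence in (0,1) with ∑ λ_n = 1, and (f_n) a sequence of nonexpansive self-maps of K with ⋂_n Fix(f_n) ≠ ∅. Then f = ∑_n λ_n f_n is a well-defined nonexpansive self-map of K and Fix(f) = ⋂_n Fix(f_n). -/
/-!
Since `f x = ∑ λₙ fₙ x` is a limit of convex combinations of the points `fₙ x`, it lies in `K`,
and `f` is nonexpansive. For the fixed points, let `p` be a common fixed point
and `f x = x`. Then `x - p = ∑ λₙ (fₙ x - p)` with `‖fₙ x - p‖ ≤ ‖x - p‖`, and splitting off the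
`m`-th term writes `x - p` as a proper convex combination of `fₘ x - p` and a vector of norm at
most `‖x - p‖`. Strict convexity forces these two to coincide, so `fₘ x = x`.
-/

open Filter Topology

section

variable {ι E : Type*} [NormedAddCommGroup E] [NormedSpace ℝ E] {l : ι → ℝ}

theorem summable_smul_of_norm_le [CompleteSpace E] {v : ι → E} {C : ℝ} (hl0 : ∀ i, 0 ≤ l i)
    (hl : Summable l) (hv : ∀ i, ‖v i‖ ≤ C) : Summable fun i => l i • v i :=
  hl.mul_right C |>.of_norm_bounded fun i => by
    rw [norm_smul, Real.norm_of_nonneg (hl0 i)]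
    exact mul_le_mul_of_nonneg_left (hv i) (hl0 i)

theorem Convex.mem_of_hasSum_smul {K : Set E} {v : ι → E} {z : E} (hK : Convex ℝ K)
    (hcl : IsClosed K) (hl0 : ∀ i, 0 ≤ l i) (hl : HasSum l 1) (hv : ∀ i, v i ∈ K)
    (h : HasSum (fun i => l i • v i) z) : z ∈ K := by
  have hcm : Tendsto (fun s : Finset ι => s.centerMass l v) atTop (𝓝 z) := by
    simpa [Finset.centerMass] using (hl.inv₀ one_ne_zero).smul h
  refine hcl.mem_of_tendsto hcm ?_
  filter_upwards [hl.eventually_const_lt zero_lt_one] with s hs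
  exact hK.centerMass_mem (fun i _ => hl0 i) hs fun i _ => hv i

theorem norm_sub_le_of_hasSum_smul {f g : ι → E} {a b : E} {r : ℝ} (hl0 : ∀ i, 0 ≤ l i)
    (hl : HasSum l 1) (hfg : ∀ i, ‖f i - g i‖ ≤ r) (hf : HasSum (fun i => l i • f i) a)
    (hg : HasSum (fun i => l i • g i) b) : ‖a - b‖ ≤ r := by
  refine (hf.sub hg).norm_le_of_bounded (by simpa using hl.mul_right r) fun i => ?_
  rw [← smul_sub, norm_smul, Real.norm_of_nonneg (hl0 i)]
  exact mul_le_mul_of_nonneg_left (hfg i) (hl0 i)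

theorem eq_of_hasSum_smul_of_norm_eq [StrictConvexSpace ℝ E] [DecidableEq ι] {u : ι → E}
    {z : E} {d : ℝ} (hl : ∀ i, l i ∈ Set.Ioo 0 1) (hl1 : HasSum l 1) (hu : ∀ i, ‖u i‖ ≤ d)
    (h : HasSum (fun i => l i • u i) z) (hz : ‖z‖ = d) (i : ι) : u i = z := by
  obtain ⟨hli0, hli1⟩ := hl i
  have hrest : ‖z - l i • u i‖ ≤ (1 - l i) * d := by
    refine (hasSum_ite_sub_hasSum h i).norm_le_of_bounded
      (by simpa [sub_mul] using hasSum_ite_sub_hasSum (hl1.mul_right d) i) fun j => ?_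
    split_ifs
    · simp
    · rw [norm_smul, Real.norm_of_nonneg (hl j).1.le]
      exact mul_le_mul_of_nonneg_left (hu j) (hl j).1.le
  set v := (1 - l i)⁻¹ • (z - l i • u i)
  have hv : ‖v‖ ≤ d := by
    rw [norm_smul, norm_inv, Real.norm_of_nonneg (sub_pos.2 hli1).le]
    exact inv_mul_le_of_le_mul₀ (sub_pos.2 hli1).le ((norm_nonneg _).trans (hu i)) hrest
  have hz_eq : z = l i • u i + (1 - l i) • v := by
    rw [smul_inv_smul₀ (sub_pos.2 hli1).ne', add_sub_cancel]
  have huv : u i = v := by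
    by_contra hne
    have := norm_combo_lt_of_ne (hu i) hv hne hli0 (sub_pos.2 hli1) (add_sub_cancel _ _)
    rw [← hz_eq] at this
    linarith
  rw [hz_eq, ← huv, ← add_smul, add_sub_cancel, one_smul]

end

theorem bruck_intersection_of_fixedPointSets_general
    {E : Type*} [NormedAddCommGroup E] [NormedSpace ℝ E] [CompleteSpace E]
    [StrictConvexSpace ℝ E]
    (K : Set E) (hcl : IsClosed K)
    (hbd : Bornology.IsBounded K) (hconv : Convex ℝ K)
    (l : ℕ → ℝ) (hl : ∀ n, l n ∈ Set.Ioo (0:ℝ) 1) (hsum : HasSum l 1)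
    (fN : ℕ → E → E) (hmaps : ∀ n, Set.MapsTo (fN n) K K)
    (hnonexp : ∀ n, ∀ x ∈ K, ∀ y ∈ K, ‖fN n x - fN n y‖ ≤ ‖x - y‖)
    (hfix : (⋂ n, {x | x ∈ K ∧ fN n x = x}).Nonempty) :
    (∀ x ∈ K, Summable fun n => l n • fN n x) ∧
    Set.MapsTo (fun x => ∑' n, l n • fN n x) K K ∧
    (∀ x ∈ K, ∀ y ∈ K, ‖(∑' n, l n • fN n x) - ∑' n, l n • fN n y‖ ≤ ‖x - y‖) ∧
    {x | x ∈ K ∧ (∑' n, l n • fN n x) = x} = ⋂ n, {x | x ∈ K ∧ fN n x = x} := by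
  obtain ⟨C, hC⟩ := hbd.exists_norm_le
  have hl0 : ∀ n, 0 ≤ l n := fun n => (hl n).1.le
  have hS : ∀ x ∈ K, Summable fun n => l n • fN n x := fun x hx =>
    summable_smul_of_norm_le hl0 hsum.summable fun n => hC _ (hmaps n hx)
  refine ⟨hS, fun x hx => hconv.mem_of_hasSum_smul hcl hl0 hsum (fun n => hmaps n hx)
    (hS x hx).hasSum, fun x hx y hy => norm_sub_le_of_hasSum_smul hl0 hsum
    (fun n => hnonexp n x hx y hy) (hS x hx).hasSum (hS y hy).hasSum, ?_⟩
  obtain ⟨p, hp⟩ := hfix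
  simp only [Set.mem_iInter, Set.mem_ofPred_eq] at hp
  ext x
  simp only [Set.mem_iInter, Set.mem_ofPred_eq]
  constructor
  · rintro ⟨hxK, hfx⟩ m
    have hdiff : HasSum (fun n => l n • (fN n x - p)) (x - p) := by
      simpa [smul_sub, hfx] using (hS x hxK).hasSum.sub (hsum.smul_const p)
    have hbound : ∀ n, ‖fN n x - p‖ ≤ ‖x - p‖ := fun n => by
      simpa [(hp n).2] using hnonexp n x hxK p (hp n).1
    exact ⟨hxK, by simpa using eq_of_hasSum_smul_of_norm_eq hl hsum hbound hdiff rfl m⟩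
  · intro hx
    have hfx : ∀ n, fN n x = x := fun n => (hx n).2
    exact ⟨(hx 0).1, HasSum.tsum_eq (by simpa [hfx] using hsum.smul_const x)⟩

theorem bruck_intersection_of_fixedPointSets
    {E : Type*} [NormedAddCommGroup E] [NormedSpace ℝ E] [CompleteSpace E]
    [StrictConvexSpace ℝ E]
    (K : Set E) (hne : K.Nonempty) (hcl : IsClosed K)
    (hbd : Bornology.IsBounded K) (hconv : Convex ℝ K)
    (l : ℕ → ℝ) (hl : ∀ n, l n ∈ Set.Ioo (0:ℝ) 1) (hsum : HasSum l 1)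
    (fN : ℕ → E → E) (hmaps : ∀ n, Set.MapsTo (fN n) K K)
    (hnonexp : ∀ n, ∀ x ∈ K, ∀ y ∈ K, ‖fN n x - fN n y‖ ≤ ‖x - y‖)
    (hfix : (⋂ n, {x | x ∈ K ∧ fN n x = x}).Nonempty) :
    (∀ x ∈ K, Summable fun n => l n • fN n x) ∧
    Set.MapsTo (fun x => ∑' n, l n • fN n x) K K ∧
    (∀ x ∈ K, ∀ y ∈ K, ‖(∑' n, l n • fN n x) - ∑' n, l n • fN n y‖ ≤ ‖x - y‖) ∧
    {x | x ∈ K ∧ (∑' n, l n • fN n x) = x} = ⋂ n, {x | x ∈ K ∧ fN n x = x} :=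
  bruck_intersection_of_fixedPointSets_general K hcl hbd hconv l hl hsum fN hmaps hnonexp hfix
end

section
/- Let H be a real Hilbert space, K ⊆ H closed, bounded and convex, f : K → K nonexpansive, A ⊆ K nonempty closed convex with projection P_A, and y ∈ Fix(f) ∩ A, and B ≥ sup{‖z‖ + 1 : z ∈ K}. Then for all x ∈ K and n ∈ ℕ: if ‖f(x) - x‖ > 2^{-n}, then ‖P_A(f(x)) - x‖ ≥ 2^{-2n-3}/B. -/
open scoped RealInnerProductSpace

set_option maxHeartbeats 1600000 in
theorem quantitative_projection_lemma
    {H : Type*} [NormedAddCommGroup H] [InnerProductSpace ℝ H] [CompleteSpace H]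
    (K : Set H) (hKcl : IsClosed K) (hKbd : Bornology.IsBounded K)
    (hKconv : Convex ℝ K)
    (f : H → H) (hmaps : Set.MapsTo f K K)
    (hnonexp : ∀ a ∈ K, ∀ b ∈ K, ‖f a - f b‖ ≤ ‖a - b‖)
    (A : Set H) (hAsub : A ⊆ K) (hAne : A.Nonempty) (hAcl : IsClosed A)
    (hAconv : Convex ℝ A)
    (P : H → H)
    (hP : ∀ x, P x ∈ A ∧ ∀ z ∈ A, dist x (P x) ≤ dist x z)
    (y : H) (hyA : y ∈ A) (hyK : y ∈ K) (hyfix : f y = y)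
    (B : ℝ) (hB : ∀ z ∈ K, ‖z‖ + 1 ≤ B) :
    ∀ x ∈ K, ∀ n : ℕ, (2:ℝ) ^ (-(n:ℤ)) < ‖f x - x‖ →
      (2:ℝ) ^ (-(2 * (n:ℤ) + 3)) / B ≤ ‖P (f x) - x‖ := by
  intro x hx n hn
  set u := f x with hu
  set p := P u with hp
  have hpA : p ∈ A := (hP u).1
  have hBge : (1:ℝ) ≤ B := le_trans (by linarith [norm_nonneg y]) (hB y hyK)
  have huK : u ∈ K := hmaps hx
  have hxB : ‖x‖ + 1 ≤ B := hB x hx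
  have hyB : ‖y‖ + 1 ≤ B := hB y hyK
  have h2 : ‖u - y‖ ≤ ‖x - y‖ := by
    have := hnonexp x hx y hyK
    rwa [hyfix] at this
  have h3 : ‖u - p‖ ≤ ‖u - y‖ := by
    simpa [dist_eq_norm] using (hP u).2 y hyA
  haveI : Nonempty A := ⟨⟨y, hyA⟩⟩
  have hinf : ‖u - p‖ = ⨅ w : A, ‖u - (w : H)‖ := by
    apply le_antisymm
    · exact le_ciInf fun w => by simpa [dist_eq_norm] using (hP u).2 w w.2
    · exact ciInf_le ⟨0, by rintro b ⟨w, rfl⟩; exact norm_nonneg _⟩ (⟨p, hpA⟩ : A)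
  have hvar : ⟪u - p, y - p⟫ ≤ 0 :=
    (norm_eq_iInf_iff_real_inner_le_zero hAconv hpA).mp hinf y hyA
  -- expand nonexpansiveness: ‖u - x‖² ≤ 2⟪u - x, y - x⟫
  have hexp : ‖u - y‖^2 = ‖u - x‖^2 + 2 * ⟪u - x, x - y⟫ + ‖x - y‖^2 := by
    have := norm_add_sq_real (u - x) (x - y)
    simpa [sub_add_sub_cancel] using this
  have hsq : ‖u - y‖^2 ≤ ‖x - y‖^2 := by
    have h0 := norm_nonneg (u - y)
    nlinarith
  have hxy : ⟪u - x, x - y⟫ = - ⟪u - x, y - x⟫ := by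
    rw [show x - y = -(y - x) by abel, inner_neg_right]
  have h4 : ‖u - x‖^2 ≤ 2 * ⟪u - x, y - x⟫ := by
    rw [hxy] at hexp; linarith
  -- split inner products
  have hsplit1 : ⟪u - x, y - x⟫ = ⟪u - p, y - x⟫ + ⟪p - x, y - x⟫ := by
    rw [show u - x = (u - p) + (p - x) by abel, inner_add_left]
  have hsplit2 : ⟪u - p, y - x⟫ = ⟪u - p, y - p⟫ + ⟪u - p, p - x⟫ := by
    rw [show y - x = (y - p) + (p - x) by abel, inner_add_right]
  have hcs1 : ⟪u - p, p - x⟫ ≤ ‖u - p‖ * ‖p - x‖ := real_inner_le_norm _ _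
  have hcs2 : ⟪p - x, y - x⟫ ≤ ‖p - x‖ * ‖y - x‖ := real_inner_le_norm _ _
  -- norm bounds
  have hb1 : ‖x - y‖ ≤ 2 * B - 2 := by
    calc ‖x - y‖ ≤ ‖x‖ + ‖y‖ := norm_sub_le _ _
    _ ≤ 2 * B - 2 := by linarith
  have hb2 : ‖y - x‖ = ‖x - y‖ := norm_sub_rev _ _
  have hup : ‖u - p‖ ≤ 2 * B - 2 := le_trans h3 (le_trans h2 hb1)
  have hpx : (0:ℝ) ≤ ‖p - x‖ := norm_nonneg _
  have e2 : ⟪u - x, y - x⟫ ≤ ‖u - p‖ * ‖p - x‖ + ‖p - x‖ * ‖y - x‖ := by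
    rw [hsplit1, hsplit2]; linarith
  have e3 : ‖u - p‖ * ‖p - x‖ ≤ (2 * B - 2) * ‖p - x‖ :=
    mul_le_mul_of_nonneg_right hup hpx
  have e4 : ‖p - x‖ * ‖y - x‖ ≤ ‖p - x‖ * (2 * B - 2) :=
    mul_le_mul_of_nonneg_left (hb2 ▸ hb1) hpx
  have hmain : ‖u - x‖^2 ≤ 8 * B * ‖p - x‖ := by nlinarith
  -- power computations
  set t := (2:ℝ) ^ (-(n:ℤ)) with ht
  have htpos : 0 < t := by positivity
  have hpow : (2:ℝ) ^ (-(2 * (n:ℤ) + 3)) = t^2 / 8 := by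
    rw [ht, show -(2 * (n:ℤ) + 3) = (-(n:ℤ)) + (-(n:ℤ)) + (-3) by ring,
      zpow_add₀ (two_ne_zero), zpow_add₀ (two_ne_zero)]
    norm_num
    ring
  have hsq2 : t^2 ≤ ‖u - x‖^2 := by nlinarith [htpos, hn]
  rw [hpow, div_le_iff₀ (by linarith : (0:ℝ) < B)]
  nlinarith [hsq2, hmain]
end

section
/- Let E be a smooth real Banach space and K ⊆ C ⊆ E nonempty closed convex sets. If Q₁, Q₂ : C → K are both sunny nonexpansive retractions of C onto K, then Q₁ = Q₂. -/
/-!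
Let `u = Q₁ x ≠ v = Q₂ x`. Sunniness and nonexpansiveness give `‖u - v‖ ≤ ‖u - v + t • (x - u)‖`
for `t ∈ [0, 1]`: the segment from `u - v` to `x - v` avoids the open ball of radius `‖u - v‖`.
Separating the two by Hahn–Banach yields a dual vector `j` of `u - v` with `0 ≤ j (x - u)`, and
symmetrically a dual vector of `v - u` that is nonnegative at `x - v`. Smoothness makes the dual
vector of `u - v` unique, so `j (x - v) ≤ 0`, whence `‖u - v‖ = j (x - v) - j (x - u) ≤ 0`.
-/

open Metric Set

lemma exists_dual_vector_nonneg_of_norm_le_norm_add_smul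
    {E : Type*} [NormedAddCommGroup E] [NormedSpace ℝ E] {w z : E} (hw : w ≠ 0)
    (h : ∀ t ∈ Icc (0 : ℝ) 1, ‖w‖ ≤ ‖w + t • z‖) :
    ∃ g : E →L[ℝ] ℝ, ‖g‖ = 1 ∧ g w = ‖w‖ ∧ 0 ≤ g z := by
  have hr : 0 < ‖w‖ := norm_pos_iff.2 hw
  have hdisj : Disjoint (ball 0 ‖w‖) (segment ℝ w (w + z)) := by
    rw [segment_eq_image', add_sub_cancel_left, disjoint_right]
    rintro _ ⟨t, ht, rfl⟩
    simpa using h t ht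
  obtain ⟨f, s, hball, hseg⟩ :=
    geometric_hahn_banach_open (convex_ball 0 ‖w‖) isOpen_ball (convex_segment _ _) hdisj
  have hs : 0 < s := by simpa using hball 0 (mem_ball_self hr)
  have hle : ∀ a ∈ closedBall (0 : E) ‖w‖, f a ≤ s := by
    rw [← closure_ball 0 hr.ne']
    exact closure_minimal (fun a ha => (hball a ha).le) (isClosed_le f.continuous continuous_const)
  have hnorm : ‖f‖ ≤ s / ‖w‖ := by
    refine f.opNorm_bound_of_ball_bound hr s fun a ha => abs_le.2 ⟨?_, hle a ha⟩
    have := hle (-a) (by simpa using ha)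
    rw [map_neg] at this
    linarith
  have hfw : f w = s := by
    refine le_antisymm ?_ (hseg w (left_mem_segment ℝ w _))
    calc f w ≤ ‖f‖ * ‖w‖ := (le_abs_self _).trans (f.le_opNorm w)
      _ ≤ s / ‖w‖ * ‖w‖ := by gcongr
      _ = s := div_mul_cancel₀ s hr.ne'
  have hfz : 0 ≤ f z := by
    have := hseg (w + z) (right_mem_segment ℝ w _)
    rw [map_add, hfw] at this
    linarith
  set g : E →L[ℝ] ℝ := (‖w‖ / s) • f
  have hgw : g w = ‖w‖ := by simp [g, hfw, hs.ne']
  refine ⟨g, le_antisymm ?_ ?_, hgw, ?_⟩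
  · rw [norm_smul, Real.norm_of_nonneg (by positivity)]
    calc ‖w‖ / s * ‖f‖ ≤ ‖w‖ / s * (s / ‖w‖) := by gcongr
      _ = 1 := by field_simp
  · refine le_of_mul_le_mul_right ?_ hr
    simpa [hgw, abs_of_pos hr] using g.le_opNorm w
  · exact mul_nonneg (div_nonneg (norm_nonneg w) hs.le) hfz

lemma norm_sub_le_of_sunny_nonexpansive {E : Type*} [NormedAddCommGroup E] [NormedSpace ℝ E]
    {K C : Set E} {Q : E → E} (hKC : K ⊆ C) (hC : Convex ℝ C) (hmaps : MapsTo Q C K)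
    (hret : ∀ x ∈ K, Q x = x) (hne : ∀ x ∈ C, ∀ y ∈ C, ‖Q x - Q y‖ ≤ ‖x - y‖)
    (hsunny : ∀ x ∈ C, ∀ α ∈ Icc (0 : ℝ) 1, Q (α • x + (1 - α) • Q x) = Q x)
    {x y : E} (hx : x ∈ C) (hy : y ∈ K) :
    ∀ t ∈ Icc (0 : ℝ) 1, ‖Q x - y‖ ≤ ‖Q x - y + t • (x - Q x)‖ := by
  intro t ht
  have hxt : t • x + (1 - t) • Q x ∈ C :=
    hC hx (hKC (hmaps hx)) ht.1 (sub_nonneg.2 ht.2) (add_sub_cancel t 1)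
  calc ‖Q x - y‖ = ‖Q (t • x + (1 - t) • Q x) - Q y‖ := by rw [hsunny x hx t ht, hret y hy]
    _ ≤ ‖t • x + (1 - t) • Q x - y‖ := hne _ hxt y (hKC hy)
    _ = ‖Q x - y + t • (x - Q x)‖ := by congr 1; module

theorem sunny_nonexpansive_retraction_unique_general
    {E : Type*} [NormedAddCommGroup E] [NormedSpace ℝ E]
    (hsmooth : ∀ x : E, x ≠ 0 → ∃! j : E →L[ℝ] ℝ, ‖j‖ = 1 ∧ j x = ‖x‖)
    (K C : Set E) (hKC : K ⊆ C)
    (hCconv : Convex ℝ C)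
    (Q₁ Q₂ : E → E)
    (hQ₁maps : Set.MapsTo Q₁ C K) (hQ₂maps : Set.MapsTo Q₂ C K)
    (hQ₁ret : ∀ x ∈ K, Q₁ x = x) (hQ₂ret : ∀ x ∈ K, Q₂ x = x)
    (hQ₁ne : ∀ x ∈ C, ∀ y ∈ C, ‖Q₁ x - Q₁ y‖ ≤ ‖x - y‖)
    (hQ₂ne : ∀ x ∈ C, ∀ y ∈ C, ‖Q₂ x - Q₂ y‖ ≤ ‖x - y‖)
    (hQ₁sunny : ∀ x ∈ C, ∀ α ∈ Set.Icc (0:ℝ) 1,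
      Q₁ (α • x + (1 - α) • Q₁ x) = Q₁ x)
    (hQ₂sunny : ∀ x ∈ C, ∀ α ∈ Set.Icc (0:ℝ) 1,
      Q₂ (α • x + (1 - α) • Q₂ x) = Q₂ x) :
    Set.EqOn Q₁ Q₂ C := by
  intro x hx
  by_contra hne
  have huv : Q₁ x - Q₂ x ≠ 0 := sub_ne_zero.2 hne
  obtain ⟨j, ⟨-, hj⟩, hjuniq⟩ := hsmooth _ huv
  obtain ⟨g₁, hg₁, hg₁w, hg₁z⟩ := exists_dual_vector_nonneg_of_norm_le_norm_add_smul huv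
    (norm_sub_le_of_sunny_nonexpansive hKC hCconv hQ₁maps hQ₁ret hQ₁ne hQ₁sunny hx (hQ₂maps hx))
  obtain ⟨g₂, hg₂, hg₂w, hg₂z⟩ := exists_dual_vector_nonneg_of_norm_le_norm_add_smul
    (sub_ne_zero.2 (Ne.symm hne))
    (norm_sub_le_of_sunny_nonexpansive hKC hCconv hQ₂maps hQ₂ret hQ₂ne hQ₂sunny hx (hQ₁maps hx))
  have hg₁j : g₁ = j := hjuniq g₁ ⟨hg₁, hg₁w⟩
  have hg₂j : -g₂ = j := hjuniq (-g₂) ⟨by rw [norm_neg, hg₂], by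
    rw [neg_apply, ← map_neg, neg_sub, hg₂w, norm_sub_rev]⟩
  have hj₁ : 0 ≤ j (x - Q₁ x) := hg₁j ▸ hg₁z
  have hj₂ : j (x - Q₂ x) ≤ 0 := by simpa [← hg₂j] using hg₂z
  have hjuv : j (Q₁ x - Q₂ x) ≤ 0 := by
    rw [show Q₁ x - Q₂ x = (x - Q₂ x) - (x - Q₁ x) by abel, map_sub]
    linarith
  exact huv (norm_le_zero_iff.1 (hj ▸ hjuv))

theorem sunny_nonexpansive_retraction_unique
    {E : Type*} [NormedAddCommGroup E] [NormedSpace ℝ E] [CompleteSpace E]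
    (hsmooth : ∀ x : E, x ≠ 0 → ∃! j : E →L[ℝ] ℝ, ‖j‖ = 1 ∧ j x = ‖x‖)
    (K C : Set E) (hKC : K ⊆ C)
    (hKne : K.Nonempty) (hKcl : IsClosed K) (hKconv : Convex ℝ K)
    (hCne : C.Nonempty) (hCcl : IsClosed C) (hCconv : Convex ℝ C)
    (Q₁ Q₂ : E → E)
    (hQ₁maps : Set.MapsTo Q₁ C K) (hQ₂maps : Set.MapsTo Q₂ C K)
    (hQ₁ret : ∀ x ∈ K, Q₁ x = x) (hQ₂ret : ∀ x ∈ K, Q₂ x = x)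
    (hQ₁ne : ∀ x ∈ C, ∀ y ∈ C, ‖Q₁ x - Q₁ y‖ ≤ ‖x - y‖)
    (hQ₂ne : ∀ x ∈ C, ∀ y ∈ C, ‖Q₂ x - Q₂ y‖ ≤ ‖x - y‖)
    (hQ₁sunny : ∀ x ∈ C, ∀ α ∈ Set.Icc (0:ℝ) 1,
      Q₁ (α • x + (1 - α) • Q₁ x) = Q₁ x)
    (hQ₂sunny : ∀ x ∈ C, ∀ α ∈ Set.Icc (0:ℝ) 1,
      Q₂ (α • x + (1 - α) • Q₂ x) = Q₂ x) :
    Set.EqOn Q₁ Q₂ C :=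
  sunny_nonexpansive_retraction_unique_general hsmooth K C hKC hCconv Q₁ Q₂ hQ₁maps hQ₂maps hQ₁ret
    hQ₂ret hQ₁ne hQ₂ne hQ₁sunny hQ₂sunny
end

section
/- Let H be a real Hilbert space and define f : H → H by f(x) = x + x^⊥ for ‖x‖ ≤ 1/2 and f(x) = x/‖x‖ - x + x^⊥ for ‖x‖ ≥ 1/2, where in H = ℝ² one sets (x₁,x₂)^⊥ = (-x₂,x₁). Then f is Lipschitz continuous with Lipschitz constant 5, but f is not nonexpansive. -/
noncomputable def perpCM (x : EuclideanSpace ℝ (Fin 2)) : EuclideanSpace ℝ (Fin 2) :=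
  (WithLp.equiv 2 (Fin 2 → ℝ)).symm ![-(x 1), x 0]

noncomputable def chidumeMutangadura (x : EuclideanSpace ℝ (Fin 2)) :
    EuclideanSpace ℝ (Fin 2) :=
  if ‖x‖ ≤ 1/2 then x + perpCM x else ‖x‖⁻¹ • x - x + perpCM x

/-!
Write `P` for the radial retraction onto the closed ball of radius `1/2`, i.e. the metric
projection onto that ball, which is nonexpansive. Then `f = 2P - id + ⊥`, with `⊥` an isometry,
so `f` is even `4`-Lipschitz. On the ball itself `f x - f y = (x - y) + (x - y)^⊥`, whose norm is
`√2 ‖x - y‖` because `x^⊥ ⊥ x`; hence `f` is not nonexpansive.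
-/

open scoped RealInnerProductSpace

section RadialRetraction

variable {E : Type*} [NormedAddCommGroup E] [InnerProductSpace ℝ E]

noncomputable def radialRetraction (r : ℝ) (x : E) : E :=
  if ‖x‖ ≤ r then x else (r / ‖x‖) • x

lemma norm_sub_div_norm_smul_le {r : ℝ} {x y : E} (hx : ‖x‖ ≤ r) (hy : r < ‖y‖) :
    ‖x - (r / ‖y‖) • y‖ ≤ ‖x - y‖ := by
  have hy0 : 0 < ‖y‖ := (norm_nonneg x).trans_lt (hx.trans_lt hy)
  have hcs : ⟪x, y⟫ ≤ ‖x‖ * ‖y‖ := real_inner_le_norm x y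
  rw [← sq_le_sq₀ (norm_nonneg _) (norm_nonneg _), norm_sub_sq_real, norm_sub_sq_real,
    inner_smul_right, norm_smul, Real.norm_of_nonneg (div_nonneg ((norm_nonneg x).trans hx) hy0.le),
    div_mul_cancel₀ _ hy0.ne']
  have key : 2 * ⟪x, y⟫ * (‖y‖ - r) ≤ (‖y‖ + r) * ‖y‖ * (‖y‖ - r) := by
    apply mul_le_mul_of_nonneg_right _ (by linarith)
    nlinarith [mul_le_mul_of_nonneg_right hx hy0.le]
  have : r / ‖y‖ * ⟪x, y⟫ * ‖y‖ = r * ⟪x, y⟫ := by field_simp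
  nlinarith

lemma norm_div_norm_smul_sub_div_norm_smul_le {r : ℝ} {x y : E} (hr : 0 ≤ r) (hx : r < ‖x‖)
    (hy : r < ‖y‖) : ‖(r / ‖x‖) • x - (r / ‖y‖) • y‖ ≤ ‖x - y‖ := by
  have hx0 : 0 < ‖x‖ := hr.trans_lt hx
  have hy0 : 0 < ‖y‖ := hr.trans_lt hy
  have hcs : ⟪x, y⟫ ≤ ‖x‖ * ‖y‖ := real_inner_le_norm x y
  have hc : r / ‖x‖ * (r / ‖y‖) * (‖x‖ * ‖y‖) = r ^ 2 := by field_simp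
  have hc1 : r / ‖x‖ * (r / ‖y‖) ≤ 1 := by
    rw [← mul_le_mul_iff_left₀ (mul_pos hx0 hy0), hc, one_mul, sq]
    exact mul_le_mul hx.le hy.le hr hx0.le
  rw [← sq_le_sq₀ (norm_nonneg _) (norm_nonneg _), norm_sub_sq_real, norm_sub_sq_real,
    real_inner_smul_left, real_inner_smul_right, norm_smul, norm_smul,
    Real.norm_of_nonneg (by positivity), Real.norm_of_nonneg (by positivity),
    div_mul_cancel₀ _ hx0.ne', div_mul_cancel₀ _ hy0.ne']
  calc r ^ 2 - 2 * (r / ‖x‖ * (r / ‖y‖ * ⟪x, y⟫)) + r ^ 2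
      = r / ‖x‖ * (r / ‖y‖) * (2 * (‖x‖ * ‖y‖ - ⟪x, y⟫)) := by linear_combination (-2 : ℝ) * hc
    _ ≤ 2 * (‖x‖ * ‖y‖ - ⟪x, y⟫) := mul_le_of_le_one_left (by linarith) hc1
    _ ≤ ‖x‖ ^ 2 - 2 * ⟪x, y⟫ + ‖y‖ ^ 2 := by nlinarith [sq_nonneg (‖x‖ - ‖y‖)]

theorem lipschitzWith_one_radialRetraction {r : ℝ} (hr : 0 ≤ r) :
    LipschitzWith 1 (radialRetraction (E := E) r) := by
  refine LipschitzWith.of_dist_le_mul fun x y => ?_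
  simp only [NNReal.coe_one, one_mul, dist_eq_norm, radialRetraction]
  split_ifs with hx hy hy
  · exact le_rfl
  · exact norm_sub_div_norm_smul_le hx (not_le.1 hy)
  · rw [norm_sub_rev, norm_sub_rev x]
    exact norm_sub_div_norm_smul_le hy (not_le.1 hx)
  · exact norm_div_norm_smul_sub_div_norm_smul_le hr (not_le.1 hx) (not_le.1 hy)

end RadialRetraction

lemma perpCM_sub (x y : EuclideanSpace ℝ (Fin 2)) : perpCM (x - y) = perpCM x - perpCM y := by
  ext i
  fin_cases i <;> simp [perpCM, neg_add_eq_sub]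

lemma norm_perpCM (x : EuclideanSpace ℝ (Fin 2)) : ‖perpCM x‖ = ‖x‖ := by
  simp [EuclideanSpace.norm_eq, perpCM, Fin.sum_univ_two, add_comm]

lemma isometry_perpCM : Isometry perpCM :=
  Isometry.of_dist_eq fun x y => by rw [dist_eq_norm, dist_eq_norm, ← perpCM_sub, norm_perpCM]

lemma inner_self_perpCM (x : EuclideanSpace ℝ (Fin 2)) : ⟪x, perpCM x⟫ = 0 := by
  simp [PiLp.inner_apply, perpCM, Fin.sum_univ_two]
  ring

lemma norm_add_perpCM (x : EuclideanSpace ℝ (Fin 2)) : ‖x + perpCM x‖ = √2 * ‖x‖ := by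
  rw [← Real.sqrt_sq (norm_nonneg (x + perpCM x)), norm_add_sq_real, inner_self_perpCM,
    norm_perpCM, mul_zero, add_zero, ← two_mul, Real.sqrt_mul zero_le_two,
    Real.sqrt_sq (norm_nonneg x)]

lemma chidumeMutangadura_eq_radialRetraction (x : EuclideanSpace ℝ (Fin 2)) :
    chidumeMutangadura x = (2 : ℝ) • radialRetraction (1 / 2) x - x + perpCM x := by
  unfold chidumeMutangadura radialRetraction
  split_ifs
  · rw [two_smul, add_sub_cancel_right]
  · rw [smul_smul, mul_div, mul_one_div_cancel two_ne_zero, one_div]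

theorem lipschitzWith_four_chidumeMutangadura : LipschitzWith 4 chidumeMutangadura := by
  rw [funext chidumeMutangadura_eq_radialRetraction,
    show (4 : NNReal) = ‖(2 : ℝ)‖₊ * 1 + 1 + 1 by norm_num]
  exact (((lipschitzWith_smul _).comp (lipschitzWith_one_radialRetraction (by norm_num))).sub
    LipschitzWith.id).add isometry_perpCM.lipschitz

lemma norm_chidumeMutangadura_sub_of_norm_le {x y : EuclideanSpace ℝ (Fin 2)} (hx : ‖x‖ ≤ 1 / 2)
    (hy : ‖y‖ ≤ 1 / 2) :
    ‖chidumeMutangadura x - chidumeMutangadura y‖ = √2 * ‖x - y‖ := by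
  rw [chidumeMutangadura, chidumeMutangadura, if_pos hx, if_pos hy, ← norm_add_perpCM,
    perpCM_sub, add_sub_add_comm]

theorem chidumeMutangadura_lipschitz_not_nonexpansive :
    LipschitzWith 5 chidumeMutangadura ∧
      ¬ ∀ x y : EuclideanSpace ℝ (Fin 2),
        ‖chidumeMutangadura x - chidumeMutangadura y‖ ≤ ‖x - y‖ := by
  refine ⟨lipschitzWith_four_chidumeMutangadura.weaken (by norm_num), fun h => ?_⟩
  set x : EuclideanSpace ℝ (Fin 2) := EuclideanSpace.single 0 (1 / 2)
  have hx : ‖x‖ = 1 / 2 := by simp [x]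
  have hexp := h x 0
  rw [norm_chidumeMutangadura_sub_of_norm_le hx.le (by simp), sub_zero, hx] at hexp
  have : 1 < √2 := by rw [Real.lt_sqrt zero_le_one]; norm_num
  linarith
end
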